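/- The function Ψ is differentiable at every W ∈ (0,∞)^{ℛ̂×𝒵×𝒳}, and its partial derivative with respect to the coordinate W(r̂₀,z₀,x₀) equals p(z₀,x₀) · log₂( W(r̂₀,z₀,x₀)·p(z₀|x₀) / S(r̂₀,z₀) ). In particular, at a channel W this derivative equals p(z₀,x₀) · log₂( p(r̂₀,z₀|x₀) / p(r̂₀,z₀) ), where p(r̂,z|x) and p(r̂,z) are the induced conditional and marginal distributions of (R̂,Z). -/

import Mathlib

/-!
For fixed `(r̂, z)` the terms of `Ψ` form a block `∑ₓ aₓ log₂(aₓ cₓ / A)` with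
`aₓ = W(r̂,z,x) p(z,x)`, `cₓ = p(z|x)` and `A = ∑ₓ aₓ = S(r̂,z)`. Differentiating the
logarithm produces `∑ₓ aₓ (ȧₓ/aₓ - Ȧ/A) / ln 2 = (Ȧ - Ȧ) / ln 2 = 0`, so only the factor
`aₓ` in front is differentiated.
-/

open Real Finset

noncomputable section

variable {ℛh 𝒵 𝒳 : Type} [Fintype ℛh] [Fintype 𝒵] [Fintype 𝒳]
  [DecidableEq ℛh] [DecidableEq 𝒵] [DecidableEq 𝒳]

/-- Marginal `p(x) = ∑_z p(z,x)`. -/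
def pXm (p : 𝒵 → 𝒳 → ℝ) (x : 𝒳) : ℝ := ∑ z, p z x

/-- Conditional `p(z|x) = p(z,x)/p(x)`. -/
def pZgX (p : 𝒵 → 𝒳 → ℝ) (z : 𝒵) (x : 𝒳) : ℝ := p z x / pXm p x

/-- `S(r̂,z) = ∑_{x'} W(r̂,z,x') p(z,x')`. -/
def SFun (p : 𝒵 → 𝒳 → ℝ) (W : ℛh × 𝒵 × 𝒳 → ℝ) (rh : ℛh) (z : 𝒵) : ℝ :=
  ∑ x', W (rh, z, x') * p z x'

/-- `Ψ(W) = ∑_{r̂,z,x} W(r̂,z,x) p(z,x) log₂( W(r̂,z,x) p(z|x) / S(r̂,z) )`; at a channel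
`W` this equals the mutual information `I(R̂,Z;X)` of the joint distribution induced by
`W` and `p`. -/
def Psi (p : 𝒵 → 𝒳 → ℝ) (W : ℛh × 𝒵 × 𝒳 → ℝ) : ℝ :=
  ∑ rh, ∑ z, ∑ x,
    W (rh, z, x) * p z x * logb 2 (W (rh, z, x) * pZgX p z x / SFun p W rh z)

section PsiBlock

variable {ι : Type*} [Fintype ι]

/-- The contribution of one pair `(r̂, z)` to `Ψ`, with `u = W(r̂,z,·)`, `w = p(z,·)` and
`c = p(z|·)`. -/
def psiBlock (w c u : ι → ℝ) : ℝ :=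
  ∑ i, u i * w i * logb 2 (u i * c i / ∑ j, u j * w j)

theorem differentiableAt_psiBlock {w c u : ι → ℝ} (hu : ∀ i, u i ≠ 0) (hc : ∀ i, c i ≠ 0)
    (hS : ∑ j, u j * w j ≠ 0) : DifferentiableAt ℝ (psiBlock w c) u := by
  unfold psiBlock
  simp only [logb]
  fun_prop (disch := first | exact hS | exact div_ne_zero (mul_ne_zero (hu _) (hc _)) hS)

theorem hasLineDerivAt_psiBlock {w c u : ι → ℝ} (hu : ∀ i, u i ≠ 0) (hc : ∀ i, c i ≠ 0)
    (hS : ∑ j, u j * w j ≠ 0) (v : ι → ℝ) :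
    HasLineDerivAt ℝ (psiBlock w c)
      (∑ i, v i * w i * logb 2 (u i * c i / ∑ j, u j * w j)) u v := by
  set S := ∑ j, u j * w j with hS_def
  set S' := ∑ j, v j * w j
  have hcoord (i : ι) : HasDerivAt (fun t : ℝ => (u + t • v) i) (v i) 0 := by
    simpa using ((hasDerivAt_id (0 : ℝ)).mul_const (v i)).const_add (u i)
  have hsum : HasDerivAt (fun t : ℝ => ∑ j, (u + t • v) j * w j) S' 0 :=
    HasDerivAt.fun_sum fun j _ => (hcoord j).mul_const (w j)
  have hterm (i : ι) : HasDerivAt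
      (fun t : ℝ => (u + t • v) i * w i * logb 2 ((u + t • v) i * c i / ∑ j, (u + t • v) j * w j))
      (v i * w i * logb 2 (u i * c i / S) + (v i * w i - u i * w i * S' / S) / log 2) 0 := by
    have hratio := ((hcoord i).mul_const (c i)).fun_div hsum (by simpa using hS)
    have hlog := hratio.log (by simpa using div_ne_zero (mul_ne_zero (hu i) (hc i)) hS)
    refine (((hcoord i).mul_const (w i)).fun_mul (hlog.div_const (log 2))).congr_deriv ?_
    simp only [zero_smul, add_zero, logb, ← hS_def]
    field_simp [hu i, hc i, hS, (Real.log_pos one_lt_two).ne']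
  have hcancel : ∑ i, (v i * w i - u i * w i * S' / S) = 0 := by
    rw [sum_sub_distrib, ← sum_div, ← sum_mul, mul_div_assoc, mul_div_cancel₀ _ hS, sub_self]
  refine (HasDerivAt.fun_sum fun i _ => hterm i).congr_deriv ?_
  rw [sum_add_distrib, ← sum_div, hcancel, zero_div, add_zero]

end PsiBlock

omit [Fintype 𝒳] [DecidableEq 𝒵] [DecidableEq 𝒳] in
theorem pZgX_pos {p : 𝒵 → 𝒳 → ℝ} (hp : ∀ z x, 0 < p z x) (z : 𝒵) (x : 𝒳) :
    0 < pZgX p z x :=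
  div_pos (hp z x) (sum_pos (fun z' _ => hp z' x) ⟨z, mem_univ z⟩)

omit [Fintype ℛh] [Fintype 𝒵] [DecidableEq ℛh] [DecidableEq 𝒵] [DecidableEq 𝒳] in
theorem SFun_pos [Nonempty 𝒳] {p : 𝒵 → 𝒳 → ℝ} {W : ℛh × 𝒵 × 𝒳 → ℝ}
    (hp : ∀ z x, 0 < p z x) (hW : ∀ i, 0 < W i) (rh : ℛh) (z : 𝒵) : 0 < SFun p W rh z :=
  sum_pos (fun x _ => mul_pos (hW _) (hp z x)) univ_nonempty

omit [DecidableEq ℛh] [DecidableEq 𝒵] [DecidableEq 𝒳] in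
theorem Psi_eq_sum_psiBlock (p : 𝒵 → 𝒳 → ℝ) :
    Psi p = fun W : ℛh × 𝒵 × 𝒳 → ℝ =>
      ∑ rh, ∑ z, psiBlock (p z) (pZgX p z) (fun x => W (rh, z, x)) :=
  rfl

omit [DecidableEq ℛh] [DecidableEq 𝒵] [DecidableEq 𝒳] in
theorem differentiableAt_Psi [Nonempty 𝒳] {p : 𝒵 → 𝒳 → ℝ} {W : ℛh × 𝒵 × 𝒳 → ℝ}
    (hp : ∀ z x, 0 < p z x) (hW : ∀ i, 0 < W i) : DifferentiableAt ℝ (Psi p) W := by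
  rw [Psi_eq_sum_psiBlock]
  refine DifferentiableAt.fun_sum fun rh _ => DifferentiableAt.fun_sum fun z _ => ?_
  have hblock := differentiableAt_psiBlock (fun x => (hW (rh, z, x)).ne')
    (fun x => (pZgX_pos hp z x).ne') (SFun_pos hp hW rh z).ne'
  have hrestrict : DifferentiableAt ℝ (fun V : ℛh × 𝒵 × 𝒳 → ℝ => fun x => V (rh, z, x)) W := by
    fun_prop
  exact (hblock.comp W hrestrict :)

omit [DecidableEq ℛh] [DecidableEq 𝒵] [DecidableEq 𝒳] in
theorem hasLineDerivAt_Psi [Nonempty 𝒳] {p : 𝒵 → 𝒳 → ℝ} {W : ℛh × 𝒵 × 𝒳 → ℝ}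
    (hp : ∀ z x, 0 < p z x) (hW : ∀ i, 0 < W i) (V : ℛh × 𝒵 × 𝒳 → ℝ) :
    HasLineDerivAt ℝ (Psi p)
      (∑ rh, ∑ z, ∑ x, V (rh, z, x) * p z x *
        logb 2 (W (rh, z, x) * pZgX p z x / SFun p W rh z)) W V := by
  rw [Psi_eq_sum_psiBlock]
  exact HasDerivAt.fun_sum fun rh _ => HasDerivAt.fun_sum fun z _ =>
    hasLineDerivAt_psiBlock (fun x => (hW _).ne') (fun x => (pZgX_pos hp z x).ne')
      (SFun_pos hp hW rh z).ne' (fun x => V (rh, z, x))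

theorem statement12_general
    (p : 𝒵 → 𝒳 → ℝ)
    (hp_pos : ∀ z x, 0 < p z x)
    (W : ℛh × 𝒵 × 𝒳 → ℝ) (hW : ∀ i, 0 < W i)
    (rh₀ : ℛh) (z₀ : 𝒵) (x₀ : 𝒳) :
    DifferentiableAt ℝ (Psi p) W ∧
    fderiv ℝ (Psi p) W (Pi.single (rh₀, z₀, x₀) 1) =
      p z₀ x₀ * logb 2 (W (rh₀, z₀, x₀) * pZgX p z₀ x₀ / SFun p W rh₀ z₀) ∧
    ((∀ z x, ∑ rh, W (rh, z, x) = 1) →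
      fderiv ℝ (Psi p) W (Pi.single (rh₀, z₀, x₀) 1) =
        p z₀ x₀ * logb 2 ((W (rh₀, z₀, x₀) * pZgX p z₀ x₀) / SFun p W rh₀ z₀)) := by
  have : Nonempty 𝒳 := ⟨x₀⟩
  have hdiff := differentiableAt_Psi hp_pos hW
  have hpartial : fderiv ℝ (Psi p) W (Pi.single (rh₀, z₀, x₀) 1) =
      p z₀ x₀ * logb 2 (W (rh₀, z₀, x₀) * pZgX p z₀ x₀ / SFun p W rh₀ z₀) := by
    rw [← hdiff.lineDeriv_eq_fderiv, (hasLineDerivAt_Psi hp_pos hW _).lineDeriv]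
    simp [Pi.single_apply, ite_and]
  exact ⟨hdiff, hpartial, fun _ => hpartial⟩

/-- `Ψ` is differentiable at every `W ∈ (0,∞)^{ℛ̂×𝒵×𝒳}`, with partial
derivative w.r.t. the coordinate `W(r̂₀,z₀,x₀)` equal to
`p(z₀,x₀) log₂( W(r̂₀,z₀,x₀) p(z₀|x₀) / S(r̂₀,z₀) )`.  In particular, at a channel `W`
this derivative equals `p(z₀,x₀) log₂( p(r̂₀,z₀|x₀) / p(r̂₀,z₀) )`, where
`p(r̂,z|x) = W(r̂,z,x) p(z|x)` and `p(r̂,z) = S(r̂,z)` are the induced conditional and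
marginal distributions of `(R̂,Z)`. -/
theorem statement12
    (p : 𝒵 → 𝒳 → ℝ)
    (hp_pos : ∀ z x, 0 < p z x) (hp_sum : ∑ z, ∑ x, p z x = 1)
    (W : ℛh × 𝒵 × 𝒳 → ℝ) (hW : ∀ i, 0 < W i)
    (rh₀ : ℛh) (z₀ : 𝒵) (x₀ : 𝒳) :
    DifferentiableAt ℝ (Psi p) W ∧
    fderiv ℝ (Psi p) W (Pi.single (rh₀, z₀, x₀) 1) =
      p z₀ x₀ * logb 2 (W (rh₀, z₀, x₀) * pZgX p z₀ x₀ / SFun p W rh₀ z₀) ∧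
    ((∀ z x, ∑ rh, W (rh, z, x) = 1) →
      fderiv ℝ (Psi p) W (Pi.single (rh₀, z₀, x₀) 1) =
        p z₀ x₀ * logb 2 ((W (rh₀, z₀, x₀) * pZgX p z₀ x₀) / SFun p W rh₀ z₀)) :=
  statement12_general p hp_pos W hW rh₀ z₀ x₀

end
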